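/- For every integer k ≥ 2 and every integer h ≥ 1, the number of irreducible polynomials p(X) ∈ ℤ[X] with deg p = k and H(p) = h is at least 9^{−k} · h^k. -/

import Mathlib

open Polynomial

/-- The height of an integer polynomial: the maximum of the absolute values
of its coefficients. -/
def polyHeight (p : Polynomial ℤ) : ℕ :=
  p.support.sup fun i => (p.coeff i).natAbs

section Aux

noncomputable def polyOf (k : ℕ) (a : ℕ → ℤ) : Polynomial ℤ :=
  ∑ j ∈ Finset.range (k+1), C (a j) * X ^ j

lemma coeff_polyOf (k : ℕ) (a : ℕ → ℤ) (i : ℕ) :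
    (polyOf k a).coeff i = if i ≤ k then a i else 0 := by
  simp [polyOf, Polynomial.finset_sum_coeff, Polynomial.coeff_C_mul, Polynomial.coeff_X_pow,
    Finset.sum_ite_eq', Finset.mem_range, Nat.lt_succ_iff]

lemma natDegree_polyOf (k : ℕ) (a : ℕ → ℤ) (hk : a k ≠ 0) : (polyOf k a).natDegree = k := by
  apply le_antisymm
  · apply Polynomial.natDegree_le_iff_coeff_eq_zero.mpr
    intro m hm
    rw [coeff_polyOf, if_neg (by omega)]
  · apply Polynomial.le_natDegree_of_ne_zero
    rw [coeff_polyOf, if_pos le_rfl]; exact hk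

lemma eisenstein_irred_map (p : Polynomial ℤ) (hdeg : 0 < p.natDegree)
    (hlead : ¬ (2 ∣ p.leadingCoeff)) (hcoeff : ∀ i < p.natDegree, 2 ∣ p.coeff i)
    (h0 : ¬ ((4:ℤ) ∣ p.coeff 0)) : Irreducible (p.map (Int.castRingHom ℚ)) := by
  have hp0 : p ≠ 0 := fun h => by simp [h] at hdeg
  have hc0 : p.content ≠ 0 := fun h => hp0 (Polynomial.content_eq_zero_iff.mp h)
  set q := p.primPart with hq
  have hpq : p = C p.content * q := p.eq_C_content_mul_primPart
  have hqdeg : q.natDegree = p.natDegree := p.natDegree_primPart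
  have hcodd : ¬ (2 ∣ p.content) := by
    intro h2
    exact hlead (h2.trans (Polynomial.content_dvd_coeff p.natDegree))
  have hqlead : ¬ (2 ∣ q.leadingCoeff) := by
    intro h2
    apply hlead
    rw [hpq, leadingCoeff_mul, leadingCoeff_C]
    exact Dvd.dvd.mul_left h2 _
  have hqcoeff : ∀ i < q.natDegree, 2 ∣ q.coeff i := by
    intro i hi
    rw [hqdeg] at hi
    have h2 : (2:ℤ) ∣ p.content * q.coeff i := by
      have := hcoeff i hi
      rwa [hpq, coeff_C_mul] at this
    exact (Int.prime_two.dvd_mul.mp h2).resolve_left hcodd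
  have hq0 : ¬ ((4:ℤ) ∣ q.coeff 0) := by
    intro h4
    apply h0
    rw [hpq, coeff_C_mul]
    exact h4.mul_left _
  have hE : q.IsEisensteinAt (Ideal.span {(2:ℤ)}) := by
    constructor
    · rw [Ideal.mem_span_singleton]; exact hqlead
    · intro i hi
      rw [Ideal.mem_span_singleton]; exact hqcoeff i hi
    · rw [Ideal.span_singleton_pow, Ideal.mem_span_singleton]
      norm_num
      exact hq0
  have hqprim : q.IsPrimitive := p.isPrimitive_primPart
  have hqirr : Irreducible q :=
    hE.irreducible (Ideal.span_singleton_prime (by norm_num) |>.mpr Int.prime_two) hqprim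
      (by omega)
  have hqmap : Irreducible (q.map (Int.castRingHom ℚ)) := by
    have := (hqprim.irreducible_iff_irreducible_map_fraction_map (K := ℚ)).mp hqirr
    rw [← algebraMap_int_eq]; exact this
  have heq : p.map (Int.castRingHom ℚ) = C ((p.content : ℚ)) * q.map (Int.castRingHom ℚ) := by
    conv_lhs => rw [hpq]
    rw [Polynomial.map_mul, map_C]
    norm_num
  rw [heq]
  have hu : IsUnit (C ((p.content : ℚ))) := by
    rw [Polynomial.isUnit_C]
    exact isUnit_iff_ne_zero.mpr (by exact_mod_cast hc0)
  exact (irreducible_isUnit_mul hu).mpr hqmap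

lemma natAbs_coeff_le_polyHeight (p : Polynomial ℤ) (i : ℕ) :
    (p.coeff i).natAbs ≤ polyHeight p := by
  by_cases hi : i ∈ p.support
  · exact Finset.le_sup (f := fun i => (p.coeff i).natAbs) hi
  · rw [Polynomial.notMem_support_iff.mp hi]
    simp

lemma polyHeight_eq_of (p : Polynomial ℤ) (h : ℕ)
    (hub : ∀ i, (p.coeff i).natAbs ≤ h)
    (i0 : ℕ) (hex : (p.coeff i0).natAbs = h) (hpos : 0 < h) : polyHeight p = h := by
  apply le_antisymm
  · exact Finset.sup_le fun i _ => hub i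
  · have hi0 : i0 ∈ p.support := by
      rw [Polynomial.mem_support_iff]
      intro h0
      rw [h0] at hex
      simp at hex
      omega
    calc h = (p.coeff i0).natAbs := hex.symm
    _ ≤ _ := Finset.le_sup (f := fun i => (p.coeff i).natAbs) hi0

lemma finite_bounded_polys (k h : ℕ) :
    {p : Polynomial ℤ | p.natDegree = k ∧ polyHeight p = h}.Finite := by
  set S := {p : Polynomial ℤ | p.natDegree = k ∧ polyHeight p = h}
  have hinj : Set.InjOn (fun p : Polynomial ℤ => fun i : Fin (k+1) => p.coeff i) S := by
    intro p hp q hq hpq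
    ext i
    by_cases hik : i ≤ k
    · exact congrFun hpq ⟨i, by omega⟩
    · have h1 : p.natDegree < i := by rw [hp.1]; omega
      have h2 : q.natDegree < i := by rw [hq.1]; omega
      rw [Polynomial.coeff_eq_zero_of_natDegree_lt h1,
        Polynomial.coeff_eq_zero_of_natDegree_lt h2]
  apply Set.Finite.of_finite_image _ hinj
  apply Set.Finite.subset (Set.Finite.pi (fun _ : Fin (k+1) => Set.finite_Icc (-(h:ℤ)) h))
  rintro - ⟨p, hp, rfl⟩
  intro i _
  have := natAbs_coeff_le_polyHeight p i
  rw [hp.2] at this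
  simp only [Set.mem_Icc]
  omega

lemma ncard_ge_of_inj {S : Set (Polynomial ℤ)} (hS : S.Finite) {k N : ℕ}
    (G : (Fin k → Fin N) → Polynomial ℤ) (hinj : Function.Injective G)
    (hmem : ∀ c, G c ∈ S) : N ^ k ≤ S.ncard := by
  have h1 : (G '' Set.univ).ncard = N ^ k := by
    rw [Set.ncard_image_of_injective _ hinj, Set.ncard_univ]
    simp
  rw [← h1]
  apply Set.ncard_le_ncard _ hS
  rintro - ⟨c, -, rfl⟩
  exact hmem c

end Aux


section Count

lemma count_odd (k h : ℕ) (hk : 2 ≤ k) (h3 : 3 ≤ h) (ho : h % 2 = 1)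
    (S : Set (Polynomial ℤ))
    (hSdef : S = {p : Polynomial ℤ | Irreducible (p.map (Int.castRingHom ℚ)) ∧
        p.natDegree = k ∧ polyHeight p = h}) (hfin : S.Finite) :
    ((h+8)/9 : ℕ) ^ k ≤ S.ncard := by
  set N := (h+8)/9 with hN
  have hN1 : 1 ≤ N := by omega
  set b : (Fin k → Fin N) → ℕ → ℕ := fun c i => if hi : i < k then (c ⟨i, hi⟩ : ℕ) else 0 with hb
  have hblt : ∀ c i, b c i < N := by
    intro c i
    rw [hb]
    dsimp only
    split
    · exact (c _).isLt
    · omega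
  set A : (Fin k → Fin N) → ℕ → ℤ := fun c i =>
    if i = k then (h:ℤ) else if i = 0 then 2 + 4*(b c 0 : ℤ) else 2*(b c i : ℤ) with hA
  set G : (Fin k → Fin N) → Polynomial ℤ := fun c => polyOf k (A c) with hG
  have hcoeff : ∀ c i, (G c).coeff i = if i ≤ k then A c i else 0 := fun c i => coeff_polyOf ..
  have hAk : ∀ c, A c k = (h:ℤ) := by intro c; rw [hA]; simp
  have hA0 : ∀ c, A c 0 = 2 + 4*(b c 0 : ℤ) := by
    intro c; rw [hA]; simp [(show ¬ ((0:ℕ) = k) by omega)]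
  have hAmid : ∀ c i, i ≠ 0 → i ≠ k → A c i = 2*(b c i : ℤ) := by
    intro c i h0 hk'; rw [hA]; simp [h0, hk']
  have hdeg : ∀ c, (G c).natDegree = k := by
    intro c
    apply natDegree_polyOf
    rw [hAk]
    exact_mod_cast (by omega : (h:ℤ) ≠ 0)
  apply ncard_ge_of_inj hfin G _ _
  · -- injective
    intro c c' hcc
    funext j
    have hjlt := j.isLt
    have hj0 : (j:ℕ) ≤ k := by omega
    have hthis : A c (j:ℕ) = A c' (j:ℕ) := by
      have := congrArg (fun p => Polynomial.coeff p (j:ℕ)) hcc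
      rwa [hcoeff, hcoeff, if_pos hj0, if_pos hj0] at this
    have hbj : b c (j:ℕ) = (c j : ℕ) := by rw [hb]; simp [j.isLt]
    have hbj' : b c' (j:ℕ) = (c' j : ℕ) := by rw [hb]; simp [j.isLt]
    have hjk : (j:ℕ) ≠ k := by omega
    apply Fin.ext
    by_cases hj : (j:ℕ) = 0
    · rw [hj] at hthis hbj hbj'
      rw [hA0, hA0] at hthis
      omega
    · rw [hAmid c _ hj hjk, hAmid c' _ hj hjk] at hthis
      omega
  · -- membership
    intro c
    rw [hSdef]
    refine ⟨?_, hdeg c, ?_⟩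
    · apply eisenstein_irred_map _ (by rw [hdeg]; omega)
      · rw [Polynomial.leadingCoeff, hdeg, hcoeff, if_pos le_rfl, hAk]
        omega
      · intro i hi
        rw [hdeg] at hi
        rw [hcoeff, if_pos (by omega)]
        by_cases hi0 : i = 0
        · rw [hi0, hA0]; omega
        · rw [hAmid c i hi0 (by omega)]; omega
      · rw [hcoeff, if_pos (by omega), hA0]
        have := hblt c 0
        omega
    · apply polyHeight_eq_of _ _ _ k _ (by omega)
      · intro i
        rw [hcoeff]
        by_cases hik : i ≤ k
        · rw [if_pos hik]
          by_cases hik' : i = k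
          · rw [hik', hAk]; omega
          · by_cases hi0 : i = 0
            · rw [hi0, hA0]
              have := hblt c 0
              omega
            · rw [hAmid c i hi0 hik']
              have := hblt c i
              omega
        · rw [if_neg hik]; simp
      · rw [hcoeff, if_pos le_rfl, hAk]
        omega


lemma count_even (k h : ℕ) (hk : 2 ≤ k) (h2 : 2 ≤ h) (he : h % 2 = 0)
    (S : Set (Polynomial ℤ))
    (hSdef : S = {p : Polynomial ℤ | Irreducible (p.map (Int.castRingHom ℚ)) ∧
        p.natDegree = k ∧ polyHeight p = h}) (hfin : S.Finite) :
    ((h+8)/9 : ℕ) ^ k ≤ S.ncard := by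
  set N := (h+8)/9 with hN
  have hN1 : 1 ≤ N := by omega
  set b : (Fin k → Fin N) → ℕ → ℕ := fun c i => if hi : i < k then (c ⟨i, hi⟩ : ℕ) else 0 with hb
  have hblt : ∀ c i, b c i < N := by
    intro c i
    rw [hb]
    dsimp only
    split
    · exact (c _).isLt
    · omega
  set A : (Fin k → Fin N) → ℕ → ℤ := fun c i =>
    if i = k then 2*(b c (k-1) : ℤ) + 1 else if i = k-1 then (h:ℤ)
      else if i = 0 then 2 + 4*(b c 0 : ℤ) else 2*(b c i : ℤ) with hA
  set G : (Fin k → Fin N) → Polynomial ℤ := fun c => polyOf k (A c) with hG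
  have hcoeff : ∀ c i, (G c).coeff i = if i ≤ k then A c i else 0 := fun c i => coeff_polyOf ..
  have hAk : ∀ c, A c k = 2*(b c (k-1) : ℤ) + 1 := by intro c; rw [hA]; simp
  have hAk1 : ∀ c, A c (k-1) = (h:ℤ) := by
    intro c; rw [hA]; simp [(show ¬ (k-1 = k) by omega)]
  have hA0 : ∀ c, A c 0 = 2 + 4*(b c 0 : ℤ) := by
    intro c; rw [hA]; simp [(show ¬ ((0:ℕ) = k) by omega), (show ¬ ((0:ℕ) = k-1) by omega)]
  have hAmid : ∀ c i, i ≠ 0 → i ≠ k-1 → i ≠ k → A c i = 2*(b c i : ℤ) := by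
    intro c i h0 hk1 hk'; rw [hA]; simp [h0, hk1, hk']
  have hdeg : ∀ c, (G c).natDegree = k := by
    intro c
    apply natDegree_polyOf
    rw [hAk]
    have := hblt c (k-1)
    omega
  apply ncard_ge_of_inj hfin G _ _
  · -- injective
    intro c c' hcc
    funext j
    have hjlt := j.isLt
    have hbj : b c (j:ℕ) = (c j : ℕ) := by rw [hb]; simp [j.isLt]
    have hbj' : b c' (j:ℕ) = (c' j : ℕ) := by rw [hb]; simp [j.isLt]
    have key : ∀ i, i ≤ k → A c i = A c' i := by
      intro i hi
      have := congrArg (fun p => Polynomial.coeff p i) hcc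
      rwa [hcoeff, hcoeff, if_pos hi, if_pos hi] at this
    apply Fin.ext
    by_cases hjk1 : (j:ℕ) = k-1
    · have := key k le_rfl
      rw [hAk, hAk] at this
      rw [hjk1] at hbj hbj'
      omega
    · by_cases hj : (j:ℕ) = 0
      · have := key 0 (by omega)
        rw [hA0, hA0] at this
        rw [hj] at hbj hbj'
        omega
      · have := key (j:ℕ) (by omega)
        rw [hAmid c _ hj hjk1 (by omega), hAmid c' _ hj hjk1 (by omega)] at this
        omega
  · -- membership
    intro c
    rw [hSdef]
    refine ⟨?_, hdeg c, ?_⟩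
    · apply eisenstein_irred_map _ (by rw [hdeg]; omega)
      · rw [Polynomial.leadingCoeff, hdeg, hcoeff, if_pos le_rfl, hAk]
        omega
      · intro i hi
        rw [hdeg] at hi
        rw [hcoeff, if_pos (by omega)]
        by_cases hik1 : i = k-1
        · rw [hik1, hAk1]; omega
        · by_cases hi0 : i = 0
          · rw [hi0, hA0]; omega
          · rw [hAmid c i hi0 hik1 (by omega)]; omega
      · rw [hcoeff, if_pos (by omega), hA0]
        have := hblt c 0
        omega
    · apply polyHeight_eq_of _ _ _ (k-1) _ (by omega)
      · intro i
        rw [hcoeff]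
        by_cases hik : i ≤ k
        · rw [if_pos hik]
          by_cases hik' : i = k
          · rw [hik', hAk]
            have := hblt c (k-1)
            omega
          · by_cases hik1 : i = k-1
            · rw [hik1, hAk1]; omega
            · by_cases hi0 : i = 0
              · rw [hi0, hA0]
                have := hblt c 0
                omega
              · rw [hAmid c i hi0 hik1 hik']
                have := hblt c i
                omega
        · rw [if_neg hik]; simp
      · rw [hcoeff, if_pos (by omega), hAk1]
        omega


lemma selmer_mem (k : ℕ) (hk : 2 ≤ k) :
    Irreducible ((X^k - X - 1 : Polynomial ℤ).map (Int.castRingHom ℚ)) ∧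
      (X^k - X - 1 : Polynomial ℤ).natDegree = k ∧ polyHeight (X^k - X - 1 : Polynomial ℤ) = 1 := by
  have hcoeff : ∀ i, (X^k - X - 1 : Polynomial ℤ).coeff i =
      if i = k then 1 else if i = 1 then -1 else if i = 0 then -1 else 0 := by
    intro i
    simp only [coeff_sub, coeff_X_pow, coeff_X, coeff_one]
    split_ifs <;> omega
  refine ⟨?_, ?_, ?_⟩
  · have : (X^k - X - 1 : Polynomial ℤ).map (Int.castRingHom ℚ) = (X^k - X - 1 : Polynomial ℚ) := by
      simp
    rw [this]
    exact X_pow_sub_X_sub_one_irreducible_rat (by omega)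
  · apply le_antisymm
    · apply Polynomial.natDegree_le_iff_coeff_eq_zero.mpr
      intro m hm
      rw [hcoeff, if_neg (by omega), if_neg (by omega), if_neg (by omega)]
    · apply Polynomial.le_natDegree_of_ne_zero
      rw [hcoeff, if_pos rfl]
      norm_num
  · apply polyHeight_eq_of _ _ _ k _ (by omega)
    · intro i
      rw [hcoeff]
      split_ifs <;> simp
    · rw [hcoeff, if_pos rfl]
      simp


end Count


/-- For every `k ≥ 2` and `h ≥ 1`, the number of polynomials `p ∈ ℤ[X]`
irreducible over `ℚ` with `deg p = k` and `H(p) = h` is at least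
`9^{−k} · h^k`. -/
theorem stmt18 (k h : ℕ) (hk : 2 ≤ k) (hh : 1 ≤ h) :
    (h : ℝ) ^ k / 9 ^ k ≤
      (({p : Polynomial ℤ | Irreducible (p.map (Int.castRingHom ℚ)) ∧
          p.natDegree = k ∧ polyHeight p = h}).ncard : ℝ) := by
  set S := {p : Polynomial ℤ | Irreducible (p.map (Int.castRingHom ℚ)) ∧
      p.natDegree = k ∧ polyHeight p = h} with hSdef
  have hsub : S ⊆ {p : Polynomial ℤ | p.natDegree = k ∧ polyHeight p = h} :=
    fun p hp => ⟨hp.2.1, hp.2.2⟩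
  have hfin : S.Finite := (finite_bounded_polys k h).subset hsub
  rcases eq_or_lt_of_le hh with h1 | h2
  · -- h = 1
    have hmem : (X^k - X - 1 : Polynomial ℤ) ∈ S := by
      rw [hSdef, ← h1]
      exact selmer_mem k hk
    have hpos : 0 < S.ncard := (Set.ncard_pos hfin).mpr ⟨_, hmem⟩
    have h1' : (1:ℝ) ≤ (S.ncard : ℝ) := by exact_mod_cast hpos
    refine le_trans ?_ h1'
    rw [div_le_one (by positivity)]
    apply pow_le_pow_left₀ (by positivity)
    rw [← h1]
    norm_num
  · -- 2 ≤ h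
    have key : ((h+8)/9 : ℕ)^k ≤ S.ncard := by
      by_cases he : h % 2 = 0
      · exact count_even k h hk (by omega) he S hSdef hfin
      · exact count_odd k h hk (by omega) (by omega) S hSdef hfin
    have hkey : ((((h+8)/9 : ℕ) : ℝ))^k ≤ (S.ncard : ℝ) := by exact_mod_cast key
    refine le_trans ?_ hkey
    rw [show (h:ℝ)^k/9^k = ((h:ℝ)/9)^k by rw [div_pow]]
    apply pow_le_pow_left₀ (by positivity)
    rw [div_le_iff₀ (by norm_num)]
    have h9 : h ≤ ((h+8)/9) * 9 := by omega
    exact_mod_cast h9
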